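/- Let a > 0 be real and z a complex number with Re(z) ≥ 2. Then the map sending ν to D_ν(a, z) = (e^{−1/(2a)}/a) ∫_0^∞ e^{−x²/(2a)} x^{ν+3} I_{√(2z+ν²)}(x/a) dx is analytic (complex differentiable) on the open band {ν ∈ ℂ : |Im(ν)| < 1}. -/

import Mathlib

/-!
A parametric integral of holomorphic functions is holomorphic as soon as the integrand has a
locally uniform integrable majorant: Cauchy's estimate then bounds the derivative as well, and one
may differentiate under the integral sign.

The Bessel series converges locally uniformly in the order `μ` on `Re μ > 0`, because
`n! |Γ(μ + 1)| ≤ |Γ(μ + n + 1)|` bounds its terms by `(ξ/2)^{Re μ} / |Γ(μ + 1)| · ((ξ/2)^n / n!)²`;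
summing gives `|I_μ(ξ)| ≤ (ξ/2)^{Re μ} e^ξ / |Γ(μ + 1)|`. On the band `|Im ν| < 1` the order
`μ = √(2z + ν²)` satisfies `Re μ > |Re ν|`, so the integrand is dominated by
`x^s e^{-x²/(4a)}` with `s = Re ν + Re μ + 3 ≥ 3`, uniformly for `ν` in a compact set.
-/

open MeasureTheory ProbabilityTheory Set
open scoped ENNReal NNReal

noncomputable section

/-- `B` is a standard one-dimensional Brownian motion on the probability space `(Ω, μ)`:
measurable in `ω`, a.s. continuous paths, `B 0 = 0` a.s., Gaussian increments
`B t - B s ~ N(0, t - s)` for `0 ≤ s ≤ t`, and independent increments. -/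
def IsBrownianMotion {Ω : Type*} [MeasurableSpace Ω] (μ : Measure Ω) (B : ℝ → Ω → ℝ) : Prop :=
  IsProbabilityMeasure μ ∧
  (∀ t : ℝ, Measurable (B t)) ∧
  (∀ᵐ ω ∂μ, Continuous fun t => B t ω) ∧
  (∀ᵐ ω ∂μ, B 0 ω = 0) ∧
  (∀ s t : ℝ, 0 ≤ s → s ≤ t →
    μ.map (fun ω => B t ω - B s ω) = gaussianReal 0 ((t - s).toNNReal)) ∧
  (∀ (n : ℕ) (t : Fin (n + 1) → ℝ), (∀ i, 0 ≤ t i) → Monotone t →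
    iIndepFun
      (fun (i : Fin n) ω => B (t i.succ) ω - B (t i.castSucc) ω) μ)

/-- Yor's accumulation process `A_x^{(ν)} = ∫_0^x exp (2 (B_w + ν w)) dw`. -/
def yorA {Ω : Type*} (B : ℝ → Ω → ℝ) (ν x : ℝ) (ω : Ω) : ℝ :=
  ∫ w in Ioc (0 : ℝ) x, Real.exp (2 * (B w ω + ν * w))

/-- The modified Bessel function of the first kind, of complex order `μ`, at real `ξ`,
defined by its power series (powers via the principal branch). -/
def besselI (μ : ℂ) (ξ : ℝ) : ℂ :=
  ∑' n : ℕ, ((ξ : ℂ) / 2) ^ (μ + 2 * n) / ((n.factorial : ℂ) * Complex.Gamma (μ + n + 1))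

/-- The generalized Weber integral `D_ν(a, z)` of Carr–Schröder. -/
def Dnu (ν : ℂ) (a : ℝ) (z : ℂ) : ℂ :=
  Complex.exp (-(1 / (2 * a))) / a *
    ∫ x in Ioi (0 : ℝ),
      Complex.exp (-(x ^ 2 : ℝ) / (2 * a)) * (x : ℂ) ^ (ν + 3) *
        besselI ((2 * z + ν ^ 2) ^ (1 / 2 : ℂ)) (x / a)

/-- Kummer's confluent hypergeometric function `Φ(α, γ; w)`. -/
def kummerPhi (α γ w : ℂ) : ℂ :=
  ∑' n : ℕ, (ascPochhammer ℂ n).eval α / (ascPochhammer ℂ n).eval γ * w ^ n / n.factorial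

open Filter Metric
open scoped Topology

section ParametricIntegral

variable {α E : Type*} [MeasurableSpace α] {μ : Measure α} [NormedAddCommGroup E]

theorem aestronglyMeasurable_deriv_of_mem_nhds {𝕜 : Type*} [NontriviallyNormedField 𝕜]
    [NormedSpace 𝕜 E] {F : 𝕜 → α → E} {x₀ : 𝕜} {s : Set 𝕜} (hs : s ∈ 𝓝 x₀)
    (hF_meas : ∀ x ∈ s, AEStronglyMeasurable (F x) μ)
    (hF_diff : ∀ᵐ a ∂μ, DifferentiableAt 𝕜 (F · a) x₀) :
    AEStronglyMeasurable (fun a => deriv (F · a) x₀) μ := by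
  have : NeBot (comap ((↑) : s → 𝕜) (𝓝[≠] x₀)) :=
    comap_coe_neBot_of_le_principal (le_principal_iff.mpr (mem_nhdsWithin_of_mem_nhds hs))
  refine aestronglyMeasurable_of_tendsto_ae (comap ((↑) : s → 𝕜) (𝓝[≠] x₀))
    (f := fun x a => slope (F · a) x₀ x) (fun x => ?_) ?_
  · exact ((hF_meas x x.2).sub (hF_meas x₀ (mem_of_mem_nhds hs))).const_smul _
  · filter_upwards [hF_diff] with a ha
    exact (hasDerivAt_iff_tendsto_slope.mp ha.hasDerivAt).comp tendsto_comap

theorem differentiableAt_integral_of_dominated_loc [NormedSpace ℂ E] [CompleteSpace E]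
    {F : ℂ → α → E} {ν₀ : ℂ} {r : ℝ} (hr : 0 < r)
    (hF_meas : ∀ ν ∈ ball ν₀ r, AEStronglyMeasurable (F ν) μ)
    (hF_diff : ∀ᵐ a ∂μ, DifferentiableOn ℂ (F · a) (ball ν₀ r))
    {bound : α → ℝ} (h_bound : ∀ᵐ a ∂μ, ∀ ν ∈ ball ν₀ r, ‖F ν a‖ ≤ bound a)
    (bound_integrable : Integrable bound μ) :
    DifferentiableAt ℂ (fun ν => ∫ a, F ν a ∂μ) ν₀ := by
  have hball : ball ν₀ r ∈ 𝓝 ν₀ := ball_mem_nhds ν₀ hr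
  have hν₀ : ν₀ ∈ ball ν₀ r := mem_ball_self hr
  have h_deriv_bound : ∀ᵐ a ∂μ, ∀ ν ∈ ball ν₀ (r / 2), ‖deriv (F · a) ν‖ ≤ bound a / (r / 4) := by
    filter_upwards [hF_diff, h_bound] with a hdiff hbd ν hν
    have hsub : closedBall ν (r / 4) ⊆ ball ν₀ r :=
      closedBall_subset_ball' (by linarith [mem_ball.mp hν])
    exact Complex.norm_deriv_le_of_forall_mem_sphere_norm_le (by positivity)
      ((hdiff.mono (closure_ball_subset_closedBall.trans hsub)).diffContOnCl)
      fun w hw => hbd w (hsub (sphere_subset_closedBall hw))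
  refine (hasDerivAt_integral_of_dominated_loc_of_deriv_le (ball_mem_nhds ν₀ (half_pos hr))
    (eventually_of_mem hball hF_meas)
    (bound_integrable.mono' (hF_meas ν₀ hν₀) (h_bound.mono fun a ha => ha ν₀ hν₀))
    (aestronglyMeasurable_deriv_of_mem_nhds hball hF_meas
      (hF_diff.mono fun a ha => ha.differentiableAt hball))
    h_deriv_bound (bound_integrable.div_const _) ?_).2.differentiableAt
  filter_upwards [hF_diff] with a ha ν hν
  exact (ha.differentiableAt (isOpen_ball.mem_nhds
    (ball_subset_ball (by linarith) hν))).hasDerivAt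

end ParametricIntegral

theorem Complex.factorial_mul_norm_Gamma_le {μ : ℂ} (hμ : 0 ≤ μ.re) (n : ℕ) :
    n.factorial * ‖Complex.Gamma (μ + 1)‖ ≤ ‖Complex.Gamma (μ + n + 1)‖ := by
  induction n with
  | zero => simp
  | succ n ih =>
    have hne : μ + n + 1 ≠ 0 := fun h => by
      have := congrArg Complex.re h
      simp only [Complex.add_re, Complex.natCast_re, Complex.one_re, Complex.zero_re] at this
      linarith [n.cast_nonneg (α := ℝ)]
    have hn : (n + 1 : ℝ) ≤ ‖μ + n + 1‖ := by
      have := Complex.re_le_norm (μ + n + 1)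
      simp only [Complex.add_re, Complex.natCast_re, Complex.one_re] at this
      linarith
    calc ((n + 1).factorial : ℝ) * ‖Complex.Gamma (μ + 1)‖
        = (n + 1) * (n.factorial * ‖Complex.Gamma (μ + 1)‖) := by
          push_cast [Nat.factorial_succ]; ring
      _ ≤ ‖μ + n + 1‖ * ‖Complex.Gamma (μ + n + 1)‖ := by gcongr
      _ = ‖Complex.Gamma (μ + ↑(n + 1) + 1)‖ := by
          rw [← norm_mul, ← Complex.Gamma_add_one _ hne]; push_cast; ring_nf

theorem Real.sq_pow_div_factorial_le {t : ℝ} (ht : 0 ≤ t) (n : ℕ) :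
    (t ^ n / n.factorial) ^ 2 ≤ t ^ n / n.factorial * Real.exp t := by
  rw [sq]
  exact mul_le_mul_of_nonneg_left (Real.pow_div_factorial_le_exp _ ht n) (by positivity)

theorem Real.summable_sq_pow_div_factorial {t : ℝ} (ht : 0 ≤ t) :
    Summable fun n : ℕ => (t ^ n / n.factorial) ^ 2 :=
  .of_nonneg_of_le (fun n => by positivity) (Real.sq_pow_div_factorial_le ht)
    ((Real.summable_pow_div_factorial t).mul_right _)

theorem Real.tsum_sq_pow_div_factorial_le {t : ℝ} (ht : 0 ≤ t) :
    ∑' n : ℕ, (t ^ n / n.factorial) ^ 2 ≤ Real.exp (2 * t) := by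
  have hexp : ∑' n : ℕ, t ^ n / n.factorial = Real.exp t := by
    rw [Real.exp_eq_exp_ℝ, NormedSpace.exp_eq_tsum_div]
  calc ∑' n : ℕ, (t ^ n / n.factorial) ^ 2
      ≤ ∑' n : ℕ, t ^ n / n.factorial * Real.exp t :=
        (Real.summable_sq_pow_div_factorial ht).tsum_le_tsum (Real.sq_pow_div_factorial_le ht)
          ((Real.summable_pow_div_factorial t).mul_right _)
    _ = Real.exp (2 * t) := by rw [tsum_mul_right, hexp, ← Real.exp_add, two_mul]

theorem Real.rpow_le_rpow_add_rpow {t m M r : ℝ} (ht : 0 < t) (hm : m ≤ r) (hM : r ≤ M) :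
    t ^ r ≤ t ^ m + t ^ M := by
  rcases le_total t 1 with h1 | h1
  · linarith [Real.rpow_le_rpow_of_exponent_ge ht h1 hm, Real.rpow_nonneg ht.le M]
  · linarith [Real.rpow_le_rpow_of_exponent_le h1 hM, Real.rpow_nonneg ht.le m]

theorem Complex.lt_re_cpow_one_half {w : ℂ} {t : ℝ} (ht : 0 ≤ t) (h : t ^ 2 < w.re) :
    t < (w ^ (1 / 2 : ℂ)).re := by
  rw [one_div, Complex.cpow_inv_two_re, Real.lt_sqrt ht]
  linarith [Complex.re_le_norm w]

section Bessel

def besselITerm (μ : ℂ) (ξ : ℝ) (n : ℕ) : ℂ :=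
  ((ξ : ℂ) / 2) ^ (μ + 2 * n) / ((n.factorial : ℂ) * Complex.Gamma (μ + n + 1))

theorem besselI_eq_tsum (μ : ℂ) (ξ : ℝ) : besselI μ ξ = ∑' n, besselITerm μ ξ n := rfl

variable {μ : ℂ} {ξ : ℝ}

theorem norm_besselITerm_le (hμ : 0 ≤ μ.re) (hξ : 0 < ξ) (n : ℕ) :
    ‖besselITerm μ ξ n‖ ≤
      (ξ / 2) ^ μ.re * ‖(Complex.Gamma (μ + 1))⁻¹‖ * ((ξ / 2) ^ n / n.factorial) ^ 2 := by
  have hξ2 : 0 < ξ / 2 := half_pos hξ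
  have hΓ : 0 < ‖Complex.Gamma (μ + 1)‖ :=
    norm_pos_iff.mpr (Complex.Gamma_ne_zero_of_re_pos
      (by simp only [Complex.add_re, Complex.one_re]; linarith))
  have hnum : ‖((ξ : ℂ) / 2) ^ (μ + 2 * n)‖ = (ξ / 2) ^ μ.re * ((ξ / 2) ^ n) ^ 2 := by
    rw [show ((ξ : ℂ) / 2) = ((ξ / 2 : ℝ) : ℂ) by push_cast; ring,
      Complex.norm_cpow_eq_rpow_re_of_pos hξ2,
      show (μ + 2 * n).re = μ.re + (2 * n : ℕ) by simp, Real.rpow_add hξ2, Real.rpow_natCast,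
      ← pow_mul, mul_comm 2 n]
  rw [besselITerm, norm_div, hnum, norm_mul, Complex.norm_natCast, norm_inv]
  calc (ξ / 2) ^ μ.re * ((ξ / 2) ^ n) ^ 2 / (n.factorial * ‖Complex.Gamma (μ + n + 1)‖)
      ≤ (ξ / 2) ^ μ.re * ((ξ / 2) ^ n) ^ 2 /
          (n.factorial * (n.factorial * ‖Complex.Gamma (μ + 1)‖)) := by
        gcongr
        exact Complex.factorial_mul_norm_Gamma_le hμ n
    _ = (ξ / 2) ^ μ.re * ‖Complex.Gamma (μ + 1)‖⁻¹ * ((ξ / 2) ^ n / n.factorial) ^ 2 := by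
        field_simp

theorem summable_norm_besselITerm (hμ : 0 ≤ μ.re) (hξ : 0 < ξ) :
    Summable fun n => ‖besselITerm μ ξ n‖ :=
  .of_nonneg_of_le (fun _ => norm_nonneg _) (norm_besselITerm_le hμ hξ)
    ((Real.summable_sq_pow_div_factorial (half_pos hξ).le).mul_left _)

theorem norm_besselI_le (hμ : 0 ≤ μ.re) (hξ : 0 < ξ) :
    ‖besselI μ ξ‖ ≤ (ξ / 2) ^ μ.re * ‖(Complex.Gamma (μ + 1))⁻¹‖ * Real.exp ξ := by
  have hξ2 : 0 ≤ ξ / 2 := (half_pos hξ).le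
  rw [besselI_eq_tsum]
  calc ‖∑' n, besselITerm μ ξ n‖ ≤ ∑' n, ‖besselITerm μ ξ n‖ :=
        norm_tsum_le_tsum_norm (summable_norm_besselITerm hμ hξ)
    _ ≤ ∑' n : ℕ, (ξ / 2) ^ μ.re * ‖(Complex.Gamma (μ + 1))⁻¹‖ * ((ξ / 2) ^ n / n.factorial) ^ 2 :=
        (summable_norm_besselITerm hμ hξ).tsum_le_tsum (norm_besselITerm_le hμ hξ)
          ((Real.summable_sq_pow_div_factorial hξ2).mul_left _)
    _ ≤ (ξ / 2) ^ μ.re * ‖(Complex.Gamma (μ + 1))⁻¹‖ * Real.exp ξ := by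
        rw [tsum_mul_left]
        gcongr
        exact (Real.tsum_sq_pow_div_factorial_le hξ2).trans_eq (by ring_nf)

theorem differentiable_besselITerm (hξ : ξ ≠ 0) (n : ℕ) :
    Differentiable ℂ fun μ => besselITerm μ ξ n := by
  have hbase : (ξ : ℂ) / 2 ≠ 0 := div_ne_zero (Complex.ofReal_ne_zero.mpr hξ) two_ne_zero
  have hterm : (fun μ => besselITerm μ ξ n) =
      fun μ : ℂ => ((ξ : ℂ) / 2) ^ (μ + 2 * n) * (Complex.Gamma (μ + n + 1))⁻¹ / n.factorial := by
    funext μ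
    rw [besselITerm]
    ring
  rw [hterm]
  exact (((differentiable_id.add_const _).const_cpow (Or.inl hbase)).mul
    (Complex.differentiable_one_div_Gamma.comp
      ((differentiable_id.add_const _).add_const _))).div_const _

theorem differentiableOn_besselI (hξ : 0 < ξ) :
    DifferentiableOn ℂ (fun μ => besselI μ ξ) {μ | 0 < μ.re} := by
  intro μ₀ hμ₀
  have hδ : 0 < μ₀.re / 2 := half_pos hμ₀
  have hre : ∀ μ ∈ closedBall μ₀ (μ₀.re / 2), 0 ≤ μ.re := fun μ hμ => by
    have := (Complex.abs_re_le_norm (μ - μ₀)).trans (mem_closedBall_iff_norm.mp hμ)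
    rw [Complex.sub_re] at this
    linarith [neg_abs_le (μ.re - μ₀.re)]
  obtain ⟨M, hM⟩ := (isCompact_closedBall μ₀ (μ₀.re / 2)).exists_bound_of_continuousOn
    (f := fun μ : ℂ => (ξ / 2) ^ μ.re * ‖(Complex.Gamma (μ + 1))⁻¹‖)
    ((continuous_const.rpow Complex.continuous_re fun _ => Or.inl (half_pos hξ).ne').mul
      (Complex.differentiable_one_div_Gamma.continuous.comp
        (continuous_add_const 1)).norm).continuousOn
  have hdiff : DifferentiableOn ℂ (fun μ => besselI μ ξ) (ball μ₀ (μ₀.re / 2)) := by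
    simp only [besselI_eq_tsum]
    exact Complex.differentiableOn_tsum_of_summable_norm
      ((Real.summable_sq_pow_div_factorial (half_pos hξ).le).mul_left M)
      (fun n => (differentiable_besselITerm hξ.ne' n).differentiableOn) isOpen_ball
      fun n μ hμ => (norm_besselITerm_le (hre μ (ball_subset_closedBall hμ)) hξ n).trans
        (by gcongr; exact (le_abs_self _).trans (hM μ (ball_subset_closedBall hμ)))
  exact (hdiff.differentiableAt (ball_mem_nhds μ₀ hδ)).differentiableWithinAt

theorem aestronglyMeasurable_besselI_comp {α : Type*} [MeasurableSpace α] {m : Measure α}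
    {f : α → ℝ} (hf : Measurable f) (hpos : ∀ᵐ x ∂m, 0 < f x) (hμ : 0 ≤ μ.re) :
    AEStronglyMeasurable (fun x => besselI μ (f x)) m := by
  refine aestronglyMeasurable_of_tendsto_ae atTop
    (f := fun N x => ∑ n ∈ Finset.range N, besselITerm μ (f x) n) (fun N => ?_) ?_
  · exact (Finset.measurable_sum _ fun n _ => by
      simp only [besselITerm]; fun_prop).aestronglyMeasurable
  · filter_upwards [hpos] with x hx
    exact (summable_norm_besselITerm hμ hx).of_norm.hasSum.tendsto_sum_nat

end Bessel

section Order

variable {z ν : ℂ}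

theorem sq_re_add_three_lt_re_two_mul_add_sq (hz : 2 ≤ z.re) (hν : |ν.im| < 1) :
    ν.re ^ 2 + 3 < (2 * z + ν ^ 2).re := by
  have him : ν.im ^ 2 < 1 := by
    rw [← sq_abs]; nlinarith [abs_nonneg ν.im]
  simp only [Complex.add_re, Complex.mul_re, sq, Complex.re_ofNat, Complex.im_ofNat]
  nlinarith

theorem abs_re_lt_re_two_mul_add_sq_cpow_one_half (hz : 2 ≤ z.re) (hν : |ν.im| < 1) :
    |ν.re| < ((2 * z + ν ^ 2) ^ (1 / 2 : ℂ)).re :=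
  Complex.lt_re_cpow_one_half (abs_nonneg _) <| by
    rw [sq_abs]; linarith [sq_re_add_three_lt_re_two_mul_add_sq hz hν]

theorem differentiableOn_two_mul_add_sq_cpow_one_half (hz : 2 ≤ z.re) :
    DifferentiableOn ℂ (fun ν : ℂ => (2 * z + ν ^ 2) ^ (1 / 2 : ℂ)) {ν : ℂ | |ν.im| < 1} :=
  fun ν hν => by
    have hre : 0 < (2 * z + ν ^ 2).re := by nlinarith [sq_re_add_three_lt_re_two_mul_add_sq hz hν]
    exact (DifferentiableAt.cpow_const (f := fun ν : ℂ => 2 * z + ν ^ 2) (by fun_prop)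
      (Complex.mem_slitPlane_iff.mpr (Or.inl hre))).differentiableWithinAt

end Order

section Integrand

def weberIntegrand (a : ℝ) (ν μ : ℂ) (x : ℝ) : ℂ :=
  Complex.exp (-(x ^ 2 : ℝ) / (2 * a)) * (x : ℂ) ^ (ν + 3) * besselI μ (x / a)

variable {a : ℝ}

theorem Dnu_eq (ν : ℂ) (a : ℝ) (z : ℂ) :
    Dnu ν a z = Complex.exp (-(1 / (2 * a))) / a *
      ∫ x in Ioi (0 : ℝ), weberIntegrand a ν ((2 * z + ν ^ 2) ^ (1 / 2 : ℂ)) x :=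
  rfl

theorem aestronglyMeasurable_weberIntegrand (ha : 0 < a) (ν : ℂ) {μ : ℂ} (hμ : 0 ≤ μ.re) :
    AEStronglyMeasurable (weberIntegrand a ν μ) (volume.restrict (Ioi 0)) :=
  (by fun_prop : Measurable fun x : ℝ =>
      Complex.exp (-(x ^ 2 : ℝ) / (2 * a)) * (x : ℂ) ^ (ν + 3)).aestronglyMeasurable.mul
    (aestronglyMeasurable_besselI_comp (measurable_id.div_const a)
      ((ae_restrict_mem measurableSet_Ioi).mono fun _ hx => div_pos hx ha) hμ)

theorem differentiableOn_weberIntegrand (ha : 0 < a) {x : ℝ} (hx : 0 < x) {U : Set ℂ}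
    {g : ℂ → ℂ} (hg : DifferentiableOn ℂ g U) (hg_re : ∀ ν ∈ U, 0 < (g ν).re) :
    DifferentiableOn ℂ (fun ν => weberIntegrand a ν (g ν) x) U :=
  ((differentiable_id.add_const 3).const_cpow
      (Or.inl (Complex.ofReal_ne_zero.mpr hx.ne'))).differentiableOn.const_mul _ |>.mul
    ((differentiableOn_besselI (div_pos hx ha)).comp hg hg_re)

theorem norm_weberIntegrand_le (ha : 0 < a) (ν : ℂ) {μ : ℂ} (hμ : 0 ≤ μ.re) {x : ℝ}
    (hx : 0 < x) :
    ‖weberIntegrand a ν μ x‖ ≤ (2 * a) ^ (-μ.re) * ‖(Complex.Gamma (μ + 1))⁻¹‖ *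
      Real.exp (1 / a) * (x ^ (ν.re + μ.re + 3) * Real.exp (-(1 / (4 * a)) * x ^ 2)) := by
  have hexp : ‖Complex.exp (-(x ^ 2 : ℝ) / (2 * a))‖ = Real.exp (-x ^ 2 / (2 * a)) := by
    rw [← Complex.norm_exp_ofReal]; push_cast; rfl
  have hpow : ‖(x : ℂ) ^ (ν + 3)‖ = x ^ (ν.re + 3) := by
    rw [Complex.norm_cpow_eq_rpow_re_of_pos hx]; simp
  have hsplit : x ^ (ν.re + 3) * (x / a / 2) ^ μ.re =
      (2 * a) ^ (-μ.re) * x ^ (ν.re + μ.re + 3) := by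
    rw [div_div, mul_comm a, Real.div_rpow hx.le (by positivity), Real.rpow_neg (by positivity),
      add_right_comm, Real.rpow_add hx (ν.re + 3)]
    ring
  have hgauss : Real.exp (-x ^ 2 / (2 * a)) * Real.exp (x / a) ≤
      Real.exp (1 / a) * Real.exp (-(1 / (4 * a)) * x ^ 2) := by
    rw [← Real.exp_add, ← Real.exp_add, Real.exp_le_exp]
    have hsq : -x ^ 2 / (2 * a) + x / a =
        1 / a + -(1 / (4 * a)) * x ^ 2 - (x - 2) ^ 2 / (4 * a) := by
      field_simp; ring
    rw [hsq]
    linarith [show 0 ≤ (x - 2) ^ 2 / (4 * a) by positivity]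
  calc ‖weberIntegrand a ν μ x‖
      = Real.exp (-x ^ 2 / (2 * a)) * x ^ (ν.re + 3) * ‖besselI μ (x / a)‖ := by
        rw [weberIntegrand, norm_mul, norm_mul, hexp, hpow]
    _ ≤ Real.exp (-x ^ 2 / (2 * a)) * x ^ (ν.re + 3) *
          ((x / a / 2) ^ μ.re * ‖(Complex.Gamma (μ + 1))⁻¹‖ * Real.exp (x / a)) := by
        gcongr
        exact norm_besselI_le hμ (div_pos hx ha)
    _ = (2 * a) ^ (-μ.re) * ‖(Complex.Gamma (μ + 1))⁻¹‖ * x ^ (ν.re + μ.re + 3) *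
          (Real.exp (-x ^ 2 / (2 * a)) * Real.exp (x / a)) := by
        linear_combination
          ‖(Complex.Gamma (μ + 1))⁻¹‖ * (Real.exp (-x ^ 2 / (2 * a)) * Real.exp (x / a)) * hsplit
    _ ≤ (2 * a) ^ (-μ.re) * ‖(Complex.Gamma (μ + 1))⁻¹‖ * x ^ (ν.re + μ.re + 3) *
          (Real.exp (1 / a) * Real.exp (-(1 / (4 * a)) * x ^ 2)) := by
        gcongr
    _ = _ := by ring

theorem exists_integrableOn_bound_weberIntegrand (ha : 0 < a) {K : Set ℂ}
    (hK : IsCompact K) {g : ℂ → ℂ} (hg : ContinuousOn g K) (hgK : ∀ ν ∈ K, |ν.re| ≤ (g ν).re) :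
    ∃ bound : ℝ → ℝ, IntegrableOn bound (Ioi 0) ∧
      ∀ x ∈ Ioi (0 : ℝ), ∀ ν ∈ K, ‖weberIntegrand a ν (g ν) x‖ ≤ bound x := by
  have hg_re : ∀ ν ∈ K, 0 ≤ (g ν).re := fun ν hν => (abs_nonneg _).trans (hgK ν hν)
  obtain ⟨C, hC⟩ := hK.exists_bound_of_continuousOn
    (f := fun ν => (2 * a) ^ (-(g ν).re) * ‖(Complex.Gamma (g ν + 1))⁻¹‖)
    (((continuous_const.rpow continuous_neg fun _ => Or.inl (by positivity)).comp_continuousOn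
      (Complex.continuous_re.comp_continuousOn hg)).mul
      (Complex.differentiable_one_div_Gamma.continuous.comp_continuousOn
        (hg.add continuousOn_const)).norm)
  obtain ⟨S, hS⟩ := hK.exists_bound_of_continuousOn (f := fun ν => ν.re + (g ν).re + 3)
    ((Complex.continuous_re.continuousOn.add (Complex.continuous_re.comp_continuousOn hg)).add
      continuousOn_const)
  have hb : (0 : ℝ) < 1 / (4 * a) := by positivity
  refine ⟨fun x => C * Real.exp (1 / a) *
      (x ^ (3 : ℝ) * Real.exp (-(1 / (4 * a)) * x ^ 2) +
        x ^ max S 3 * Real.exp (-(1 / (4 * a)) * x ^ 2)),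
    (((integrableOn_rpow_mul_exp_neg_mul_sq hb (by norm_num)).add
      (integrableOn_rpow_mul_exp_neg_mul_sq hb (by linarith [le_max_right S 3]))).const_mul _),
    fun x (hx : 0 < x) ν hν => ?_⟩
  have hexp_le : ν.re + (g ν).re + 3 ≤ max S 3 :=
    ((Real.le_norm_self _).trans (hS ν hν)).trans (le_max_left S 3)
  have hexp_ge : (3 : ℝ) ≤ ν.re + (g ν).re + 3 := by linarith [neg_abs_le ν.re, hgK ν hν]
  have hCν : (2 * a) ^ (-(g ν).re) * ‖(Complex.Gamma (g ν + 1))⁻¹‖ ≤ C :=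
    (Real.le_norm_self _).trans (hC ν hν)
  have hC0 : 0 ≤ C := (norm_nonneg _).trans (hC ν hν)
  have hpow := Real.rpow_le_rpow_add_rpow hx hexp_ge hexp_le
  calc ‖weberIntegrand a ν (g ν) x‖
      ≤ (2 * a) ^ (-(g ν).re) * ‖(Complex.Gamma (g ν + 1))⁻¹‖ * Real.exp (1 / a) *
          (x ^ (ν.re + (g ν).re + 3) * Real.exp (-(1 / (4 * a)) * x ^ 2)) :=
        norm_weberIntegrand_le ha ν (hg_re ν hν) hx
    _ ≤ C * Real.exp (1 / a) *
          ((x ^ (3 : ℝ) + x ^ max S 3) * Real.exp (-(1 / (4 * a)) * x ^ 2)) := by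
        gcongr
    _ = _ := by ring

end Integrand

theorem stmt5 (a : ℝ) (ha : 0 < a) (z : ℂ) (hz : 2 ≤ z.re) :
    DifferentiableOn ℂ (fun ν : ℂ => Dnu ν a z) {ν : ℂ | |ν.im| < 1} := by
  intro ν₀ hν₀
  have hopen : IsOpen {ν : ℂ | |ν.im| < 1} :=
    isOpen_lt (continuous_abs.comp Complex.continuous_im) continuous_const
  obtain ⟨r, hr, hK⟩ := nhds_basis_closedBall.mem_iff.mp (hopen.mem_nhds hν₀)
  have hord := differentiableOn_two_mul_add_sq_cpow_one_half hz
  have hre : ∀ ν ∈ closedBall ν₀ r, |ν.re| < ((2 * z + ν ^ 2) ^ (1 / 2 : ℂ)).re :=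
    fun ν hν => abs_re_lt_re_two_mul_add_sq_cpow_one_half hz (hK hν)
  obtain ⟨bound, hbound_int, hbound⟩ := exists_integrableOn_bound_weberIntegrand ha
    (isCompact_closedBall ν₀ r) (hord.continuousOn.mono hK) fun ν hν => (hre ν hν).le
  have hint : DifferentiableAt ℂ (fun ν => ∫ x in Ioi (0 : ℝ),
      weberIntegrand a ν ((2 * z + ν ^ 2) ^ (1 / 2 : ℂ)) x) ν₀ :=
    differentiableAt_integral_of_dominated_loc hr
      (fun ν hν => aestronglyMeasurable_weberIntegrand ha ν
        ((abs_nonneg _).trans (hre ν (ball_subset_closedBall hν)).le))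
      ((ae_restrict_mem measurableSet_Ioi).mono fun x hx =>
        differentiableOn_weberIntegrand ha hx (hord.mono (ball_subset_closedBall.trans hK))
          fun ν hν => (abs_nonneg _).trans_lt (hre ν (ball_subset_closedBall hν)))
      ((ae_restrict_mem measurableSet_Ioi).mono fun x hx ν hν =>
        hbound x hx ν (ball_subset_closedBall hν))
      hbound_int
  simp only [Dnu_eq]
  exact (hint.const_mul _).differentiableWithinAt

end
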